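/- Let γ : ℝ → ℝ³ be a unit speed spherical curve with differentiable geodesic curvature k_g and p(s) = γ(s) × γ'(s). Let b > 0 and θ ∈ (0, π) with 1 − cot θ · k_g(s) > 0 on the interval considered, a ∈ ℝ³, and define c(s) = b ∫_{s₀}^{s} γ(φ) dφ + b cot θ ∫_{s₀}^{s} p(φ) dφ + a. Then σ(s) = (κ²/(ν (κ² + τ²)^{3/2}))·(τ/κ)'(s) = k_g'(s)/(k_g(s)² + 1)^{3/2} for all s, where ν, κ, τ are the speed, curvature and torsion of c. -/

import Mathlib

noncomputable section

/-- ℝ³ as a Euclidean space. -/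
abbrev E3 : Type := EuclideanSpace ℝ (Fin 3)

/-- The cross product on ℝ³. -/
def cross3 (u v : E3) : E3 :=
  (WithLp.equiv 2 (Fin 3 → ℝ)).symm
    (crossProduct ((WithLp.equiv 2 (Fin 3 → ℝ)) u) ((WithLp.equiv 2 (Fin 3 → ℝ)) v))

/-- The (real) inner product on ℝ³. -/
def inner3 (u v : E3) : ℝ := inner ℝ u v

/-- The speed ν of a curve. -/
def speed (c : ℝ → E3) (s : ℝ) : ℝ := ‖deriv c s‖

/-- The curvature κ of a curve. -/
def curvature (c : ℝ → E3) (s : ℝ) : ℝ :=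
  ‖cross3 (deriv c s) (deriv (deriv c) s)‖ / ‖deriv c s‖ ^ 3

/-- The torsion τ of a curve. -/
def torsion (c : ℝ → E3) (s : ℝ) : ℝ :=
  inner3 (cross3 (deriv c s) (deriv (deriv c) s)) (deriv (deriv (deriv c)) s) /
    ‖cross3 (deriv c s) (deriv (deriv c) s)‖ ^ 2

/-- σ(s) = (κ²/(ν (κ² + τ²)^{3/2}))·(τ/κ)'(s), the geodesic curvature of the spherical
image of the principal normal indicatrix. -/
def sigmaOf (c : ℝ → E3) (s : ℝ) : ℝ :=
  (curvature c s) ^ 2 / (speed c s * ((curvature c s) ^ 2 + (torsion c s) ^ 2) ^ ((3 : ℝ) / 2)) *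
    deriv (fun t => torsion c t / curvature c t) s

/-- The geodesic curvature k_g(s) = det(γ(s), γ'(s), γ''(s)) = ⟨γ(s) × γ'(s), γ''(s)⟩ of a
unit speed spherical curve γ. -/
def kgOf (γ : ℝ → E3) (s : ℝ) : ℝ :=
  inner3 (cross3 (γ s) (deriv γ s)) (deriv (deriv γ) s)

/-- Build a vector in ℝ³ from coordinates. -/
def mk3 (x y z : ℝ) : E3 := (WithLp.equiv 2 (Fin 3 → ℝ)).symm ![x, y, z]

end


noncomputable section
open Matrix

lemma inner3_eq (u v : E3) :
    inner3 u v = (WithLp.equiv 2 (Fin 3 → ℝ) u) ⬝ᵥ (WithLp.equiv 2 (Fin 3 → ℝ) v) := by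
  simp [inner3, PiLp.inner_apply, dotProduct, mul_comm]

lemma inner3_comm (u v : E3) : inner3 u v = inner3 v u := (real_inner_comm v u)

lemma inner3_self (v : E3) : inner3 v v = ‖v‖ ^ 2 := real_inner_self_eq_norm_sq v

lemma inner3_add_left (u v w : E3) : inner3 (u + v) w = inner3 u w + inner3 v w :=
  inner_add_left u v w
lemma inner3_add_right (u v w : E3) : inner3 u (v + w) = inner3 u v + inner3 u w :=
  inner_add_right u v w
lemma inner3_smul_left (x : ℝ) (u v : E3) : inner3 (x • u) v = x * inner3 u v :=
  real_inner_smul_left u v x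
lemma inner3_smul_right (x : ℝ) (u v : E3) : inner3 u (x • v) = x * inner3 u v :=
  real_inner_smul_right u v x
lemma inner3_neg_left (u v : E3) : inner3 (-u) v = -inner3 u v := by
  simp [inner3]
lemma inner3_neg_right (u v : E3) : inner3 u (-v) = -inner3 u v := by
  simp [inner3]

lemma cross3_add_left (u v w : E3) : cross3 (u + v) w = cross3 u w + cross3 v w := by
  simp [cross3, map_add]
lemma cross3_add_right (u v w : E3) : cross3 u (v + w) = cross3 u v + cross3 u w := by
  simp [cross3, map_add]
lemma cross3_smul_left (x : ℝ) (u v : E3) : cross3 (x • u) v = x • cross3 u v := by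
  simp [cross3, _root_.map_smul]
lemma cross3_smul_right (x : ℝ) (u v : E3) : cross3 u (x • v) = x • cross3 u v := by
  simp [cross3, _root_.map_smul]
lemma cross3_neg_left (u v : E3) : cross3 (-u) v = -cross3 u v := by
  have := cross3_smul_left (-1) u v; simpa using this
lemma cross3_neg_right (u v : E3) : cross3 u (-v) = -cross3 u v := by
  have := cross3_smul_right (-1) u v; simpa using this

lemma cross3_self (v : E3) : cross3 v v = 0 := by
  simp [cross3, cross_self]

lemma cross3_anticomm (u v : E3) : cross3 u v = -cross3 v u := by
  unfold cross3
  rw [← cross_anticomm]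
  rfl

lemma baccab (a b c : Fin 3 → ℝ) : a ⨯₃ (b ⨯₃ c) = (a ⬝ᵥ c) • b - (a ⬝ᵥ b) • c := by
  funext i
  fin_cases i <;> simp [crossProduct, dotProduct, Fin.sum_univ_three] <;> ring

lemma cross3_cross3 (a b c : E3) :
    cross3 a (cross3 b c) = inner3 a c • b - inner3 a b • c := by
  simp only [cross3, inner3_eq, Equiv.apply_symm_apply, baccab]
  rfl

lemma inner3_cross_left (u v : E3) : inner3 u (cross3 u v) = 0 := by
  simp only [inner3_eq, cross3, Equiv.apply_symm_apply]
  exact dot_self_cross _ _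

lemma inner3_cross_right (u v : E3) : inner3 v (cross3 u v) = 0 := by
  simp only [inner3_eq, cross3, Equiv.apply_symm_apply]
  exact dot_cross_self _ _

lemma inner3_cross_cross (u v w x : E3) :
    inner3 (cross3 u v) (cross3 w x) =
      inner3 u w * inner3 v x - inner3 u x * inner3 v w := by
  simp only [inner3_eq, cross3, Equiv.apply_symm_apply]
  exact cross_dot_cross u v w x

lemma dot_self_zero (x : Fin 3 → ℝ) (h : x ⬝ᵥ x = 0) : x = 0 := by
  simp only [dotProduct, Fin.sum_univ_three] at h
  funext i
  fin_cases i <;> simp <;> nlinarith [sq_nonneg (x 0), sq_nonneg (x 1), sq_nonneg (x 2)]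

lemma decomp (a b v : Fin 3 → ℝ) (ha : a ⬝ᵥ a = 1) (hb : b ⬝ᵥ b = 1) (hab : a ⬝ᵥ b = 0) :
    v = (v ⬝ᵥ a) • a + (v ⬝ᵥ b) • b + (v ⬝ᵥ (a ⨯₃ b)) • (a ⨯₃ b) := by
  set n := a ⨯₃ b with hn
  have hnn : n ⬝ᵥ n = 1 := by
    rw [hn, cross_dot_cross, ha, hb, hab]; ring
  set w := v - (v ⬝ᵥ a) • a - (v ⬝ᵥ b) • b - (v ⬝ᵥ n) • n with hw
  have hna : a ⬝ᵥ n = 0 := dot_self_cross a b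
  have hnb : b ⬝ᵥ n = 0 := dot_cross_self a b
  have hwa : w ⬝ᵥ a = 0 := by
    rw [hw]
    simp only [sub_dotProduct, smul_dotProduct, smul_eq_mul, ha,
      dotProduct_comm b a, dotProduct_comm n a, hab, hna]
    ring
  have hwb : w ⬝ᵥ b = 0 := by
    rw [hw]
    simp only [sub_dotProduct, smul_dotProduct, smul_eq_mul, hb,
      dotProduct_comm n b, hab, hnb]
    ring
  have hwn : w ⬝ᵥ n = 0 := by
    rw [hw]
    simp only [sub_dotProduct, smul_dotProduct, smul_eq_mul, hnn, hna, hnb]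
    ring
  have hcross : w ⨯₃ n = 0 := by
    rw [hn, baccab, hwb, hwa]
    simp
  have hww : w ⬝ᵥ w = 0 := by
    have h2 := cross_dot_cross w n w n
    rw [hcross] at h2
    simp only [zero_dotProduct, hnn, hwn, mul_one] at h2
    linarith
  have hw0 : w = 0 := dot_self_zero w hww
  have hfin : v - ((v ⬝ᵥ a) • a + (v ⬝ᵥ b) • b + (v ⬝ᵥ n) • n) = 0 := by
    rw [← hw0, hw]; abel
  exact (sub_eq_zero.mp hfin)

lemma decomp3 (a b v : E3) (ha : inner3 a a = 1) (hb : inner3 b b = 1)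
    (hab : inner3 a b = 0) :
    v = inner3 v a • a + inner3 v b • b + inner3 v (cross3 a b) • cross3 a b := by
  have := decomp (WithLp.equiv 2 (Fin 3 → ℝ) a) (WithLp.equiv 2 (Fin 3 → ℝ) b)
    (WithLp.equiv 2 (Fin 3 → ℝ) v)
    (by rw [← inner3_eq]; exact ha) (by rw [← inner3_eq]; exact hb)
    (by rw [← inner3_eq]; exact hab)
  apply (WithLp.equiv 2 (Fin 3 → ℝ)).injective
  simp only [WithLp.equiv_apply, WithLp.ofLp_add, WithLp.ofLp_smul, inner3_eq, cross3, Equiv.apply_symm_apply]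
  exact this

def crossLM : E3 →ₗ[ℝ] E3 →ₗ[ℝ] E3 :=
  LinearMap.mk₂ ℝ cross3
    (fun u v w => cross3_add_left u v w)
    (fun x u w => cross3_smul_left x u w)
    (fun u v w => cross3_add_right u v w)
    (fun x u w => cross3_smul_right x u w)

def crossCLM : E3 →L[ℝ] E3 →L[ℝ] E3 :=
  LinearMap.toContinuousLinearMap
    ((LinearMap.toContinuousLinearMap.toLinearMap :
        (E3 →ₗ[ℝ] E3) →ₗ[ℝ] (E3 →L[ℝ] E3)).comp crossLM)

@[simp] lemma crossCLM_apply (u v : E3) : crossCLM u v = cross3 u v := rfl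

lemma HasDerivAt.cross3' {f g : ℝ → E3} {f' g' : E3} {x : ℝ}
    (hf : HasDerivAt f f' x) (hg : HasDerivAt g g' x) :
    HasDerivAt (fun s => cross3 (f s) (g s)) (cross3 f' (g x) + cross3 (f x) g') x := by
  have h1 : HasDerivAt (fun s => crossCLM (f s)) (crossCLM f') x :=
    (crossCLM.hasFDerivAt.comp_hasDerivAt x hf)
  simpa using h1.clm_apply hg

lemma HasDerivAt.inner3' {f g : ℝ → E3} {f' g' : E3} {x : ℝ}
    (hf : HasDerivAt f f' x) (hg : HasDerivAt g g' x) :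
    HasDerivAt (fun s => inner3 (f s) (g s)) (inner3 (f x) g' + inner3 f' (g x)) x :=
  HasDerivAt.inner ℝ hf hg

lemma inner3_combo {G T P : E3} (hGG : inner3 G G = 1) (hTT : inner3 T T = 1)
    (hPP : inner3 P P = 1) (hGT : inner3 G T = 0) (hGP : inner3 G P = 0)
    (hTP : inner3 T P = 0) (x1 y1 z1 x2 y2 z2 : ℝ) :
    inner3 (x1 • G + y1 • T + z1 • P) (x2 • G + y2 • T + z2 • P) =
      x1 * x2 + y1 * y2 + z1 * z2 := by
  have hTG : inner3 T G = 0 := by rw [inner3_comm]; exact hGT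
  have hPG : inner3 P G = 0 := by rw [inner3_comm]; exact hGP
  have hPT : inner3 P T = 0 := by rw [inner3_comm]; exact hTP
  simp only [inner3_add_left, inner3_add_right, inner3_smul_left, inner3_smul_right,
    hGG, hTT, hPP, hGT, hGP, hTP, hTG, hPG, hPT]
  ring

lemma norm_combo {G T P : E3} (hGG : inner3 G G = 1) (hTT : inner3 T T = 1)
    (hPP : inner3 P P = 1) (hGT : inner3 G T = 0) (hGP : inner3 G P = 0)
    (hTP : inner3 T P = 0) (x y z : ℝ) :
    ‖x • G + y • T + z • P‖ = Real.sqrt (x ^ 2 + y ^ 2 + z ^ 2) := by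
  have h := inner3_combo hGG hTT hPP hGT hGP hTP x y z x y z
  rw [inner3_self] at h
  rw [← Real.sqrt_sq (norm_nonneg (x • G + y • T + z • P)), h]
  ring_nf

end

/-- For the Bertrand-type curve c(s) = b ∫ γ dφ + b cot θ ∫ p dφ + a with
b > 0, θ ∈ (0, π) and 1 − cot θ k_g > 0 on I: σ(s) = k_g'(s)/(k_g(s)² + 1)^{3/2} on I. -/
theorem sigma_formula_bertrand_curve
    (γ : ℝ → E3) (hγ : ContDiff ℝ (⊤ : ℕ∞) γ)
    (hsph : ∀ s, ‖γ s‖ = 1) (hunit : ∀ s, ‖deriv γ s‖ = 1)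
    (hkgd : Differentiable ℝ (kgOf γ))
    (b θ : ℝ) (hb : 0 < b) (hθ : θ ∈ Set.Ioo 0 Real.pi)
    (I : Set ℝ) (hIne : I.Nonempty) (hIopen : IsOpen I) (hIconn : I.OrdConnected)
    (hreg : ∀ s ∈ I, 0 < 1 - Real.cot θ * kgOf γ s)
    (a : E3) (s₀ : ℝ) (c : ℝ → E3)
    (hc : ∀ s, c s = b • (∫ φ in s₀..s, γ φ) +
      (b * Real.cot θ) • (∫ φ in s₀..s, cross3 (γ φ) (deriv γ φ)) + a) :
    ∀ s ∈ I, sigmaOf c s = deriv (kgOf γ) s / ((kgOf γ s) ^ 2 + 1) ^ ((3 : ℝ) / 2) := by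
  intro s hs
  have hγd : Differentiable ℝ γ := hγ.differentiable (by simp)
  set t : ℝ → E3 := deriv γ with htdef
  have hd1 : ∀ u, HasDerivAt γ (t u) u := fun u => (hγd u).hasDerivAt
  have hγ' : ContDiff ℝ ((⊤:ℕ∞):WithTop ℕ∞) γ := hγ.of_le (by simp)
  have htcd := (contDiff_infty_iff_deriv.mp hγ').2
  have htd : Differentiable ℝ t := htcd.differentiable (by simp)
  set g2 : ℝ → E3 := deriv t with hg2def
  have hd2 : ∀ u, HasDerivAt t (g2 u) u := fun u => (htd u).hasDerivAt
  set p : ℝ → E3 := fun u => cross3 (γ u) (t u) with hpdef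
  set k : ℝ → ℝ := kgOf γ with hkdef
  set K := Real.cot θ with hKdef
  -- inner product table
  have iγγ : ∀ u, inner3 (γ u) (γ u) = 1 := fun u => by
    rw [inner3_self, hsph u]; norm_num
  have itt : ∀ u, inner3 (t u) (t u) = 1 := fun u => by
    rw [inner3_self, hunit u]; norm_num
  have iγt : ∀ u, inner3 (γ u) (t u) = 0 := by
    intro u
    have hD : HasDerivAt (fun w => inner3 (γ w) (γ w))
        (inner3 (γ u) (t u) + inner3 (t u) (γ u)) u := (hd1 u).inner3' (hd1 u)
    have hconst : (fun w => inner3 (γ w) (γ w)) = fun _ => (1:ℝ) := funext iγγ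
    rw [hconst] at hD
    have h0 := hD.unique (hasDerivAt_const u 1)
    have hcomm := inner3_comm (t u) (γ u)
    linarith
  have itg2 : ∀ u, inner3 (t u) (g2 u) = 0 := by
    intro u
    have hD : HasDerivAt (fun w => inner3 (t w) (t w))
        (inner3 (t u) (g2 u) + inner3 (g2 u) (t u)) u := (hd2 u).inner3' (hd2 u)
    have hconst : (fun w => inner3 (t w) (t w)) = fun _ => (1:ℝ) := funext itt
    rw [hconst] at hD
    have h0 := hD.unique (hasDerivAt_const u 1)
    have hcomm := inner3_comm (g2 u) (t u)
    linarith
  have iγg2 : ∀ u, inner3 (γ u) (g2 u) = -1 := by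
    intro u
    have hD : HasDerivAt (fun w => inner3 (γ w) (t w))
        (inner3 (γ u) (g2 u) + inner3 (t u) (t u)) u := (hd1 u).inner3' (hd2 u)
    have hconst : (fun w => inner3 (γ w) (t w)) = fun _ => (0:ℝ) := funext iγt
    rw [hconst] at hD
    have h0 := hD.unique (hasDerivAt_const u 0)
    have h1 := itt u
    linarith
  have iγp : ∀ u, inner3 (γ u) (p u) = 0 := fun u => inner3_cross_left (γ u) (t u)
  have itp : ∀ u, inner3 (t u) (p u) = 0 := fun u => inner3_cross_right (γ u) (t u)
  have ipp : ∀ u, inner3 (p u) (p u) = 1 := by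
    intro u
    have h := inner3_cross_cross (γ u) (t u) (γ u) (t u)
    have hcomm := inner3_comm (t u) (γ u)
    rw [iγγ u, itt u, iγt u] at h
    simp only [hpdef]
    rw [h]
    rw [hcomm, iγt u]; ring
  have hkval : ∀ u, inner3 (g2 u) (p u) = k u := by
    intro u
    rw [inner3_comm]
    rfl
  have hg2val : ∀ u, g2 u = -γ u + k u • p u := by
    intro u
    have hdec := decomp3 (γ u) (t u) (g2 u) (iγγ u) (itt u) (iγt u)
    rw [show inner3 (g2 u) (γ u) = -1 from by rw [inner3_comm]; exact iγg2 u,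
        show inner3 (g2 u) (t u) = 0 from by rw [inner3_comm]; exact itg2 u] at hdec
    rw [show cross3 (γ u) (t u) = p u from rfl, hkval u] at hdec
    rw [hdec]; module
  -- cross product table
  have hγp : ∀ u, cross3 (γ u) (p u) = -t u := by
    intro u
    simp only [hpdef]
    rw [cross3_cross3, iγt u, iγγ u]; module
  have hpt : ∀ u, cross3 (p u) (t u) = -γ u := by
    intro u
    rw [cross3_anticomm]
    simp only [hpdef]
    rw [cross3_cross3, itt u, show inner3 (t u) (γ u) = 0 from by
      rw [inner3_comm]; exact iγt u]
    module
  -- derivative of p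
  have hdp : ∀ u, HasDerivAt p (-(k u) • t u) u := by
    intro u
    have h : HasDerivAt p (cross3 (t u) (t u) + cross3 (γ u) (g2 u)) u :=
      (hd1 u).cross3' (hd2 u)
    convert h using 1
    rw [cross3_self, hg2val u, cross3_add_right, cross3_neg_right, cross3_self,
      cross3_smul_right, hγp u]
    module
  have hpd : Differentiable ℝ p := fun u => (hdp u).differentiableAt
  have hpc : Continuous p := hpd.continuous
  have hγc : Continuous γ := hγ.continuous
  -- derivatives of c
  have hc1 : ∀ u, HasDerivAt c (b • γ u + (b*K) • p u) u := by
    intro u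
    have hF := (hγc.integral_hasStrictDerivAt s₀ u).hasDerivAt
    have hG := (hpc.integral_hasStrictDerivAt s₀ u).hasDerivAt
    have h := ((hF.const_smul b).add (hG.const_smul (b*K))).add_const a
    exact h.congr_of_eventuallyEq (Filter.Eventually.of_forall fun w => hc w)
  have dc1 : deriv c = fun u => b • γ u + (b*K) • p u := funext fun u => (hc1 u).deriv
  have hk' : ∀ u, HasDerivAt k (deriv k u) u := fun u => (hkgd u).hasDerivAt
  have hc2 : ∀ u, HasDerivAt (fun w => b • γ w + (b*K) • p w) ((b*(1 - K*k u)) • t u) u := by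
    intro u
    have h := ((hd1 u).const_smul b).add ((hdp u).const_smul (b*K))
    refine h.congr_deriv ?_
    module
  have dc2 : deriv (deriv c) = fun u => (b*(1 - K*k u)) • t u := by
    rw [dc1]; exact funext fun u => (hc2 u).deriv
  have hc3 : ∀ u, HasDerivAt (fun w => (b*(1 - K*k w)) • t w)
      ((-(b*(1-K*k u))) • γ u + (-(b*K*deriv k u)) • t u + (b*(1-K*k u)*k u) • p u) u := by
    intro u
    have hs1 : HasDerivAt (fun w => b*(1 - K*k w)) (b*(-(K*deriv k u))) u :=
      (((hk' u).const_mul K).const_sub 1).const_mul b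
    have h := hs1.smul (hd2 u)
    refine h.congr_deriv ?_
    rw [hg2val u]
    module
  have dc3 : ∀ u, deriv (deriv (deriv c)) u =
      (-(b*(1-K*k u))) • γ u + (-(b*K*deriv k u)) • t u + (b*(1-K*k u)*k u) • p u := by
    intro u
    rw [dc2]; exact (hc3 u).deriv
  -- scalar abbreviations
  have hA : (0:ℝ) < 1 + K^2 := by positivity
  set Q := Real.sqrt (1 + K^2) with hQdef
  have hQpos : 0 < Q := Real.sqrt_pos.mpr hA
  have hQsq : Q^2 = 1 + K^2 := Real.sq_sqrt hA.le
  -- speed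
  have hspeed : ∀ u, speed c u = b * Q := by
    intro u
    have hv : deriv c u = b • γ u + (0:ℝ) • t u + (b*K) • p u := by
      simp only [dc1]; module
    rw [speed, hv, norm_combo (iγγ u) (itt u) (ipp u) (iγt u) (iγp u) (itp u)]
    rw [show b^2 + 0^2 + (b*K)^2 = b^2*(1+K^2) by ring,
      Real.sqrt_mul (sq_nonneg b), Real.sqrt_sq hb.le, hQdef]
  -- cross product of first two derivatives
  have hcrossval : ∀ u, cross3 (deriv c u) (deriv (deriv c) u) =
      (-(b^2*(1-K*k u)*K)) • γ u + (0:ℝ) • t u + (b^2*(1-K*k u)) • p u := by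
    intro u
    simp only [dc2]
    simp only [dc1]
    rw [cross3_smul_right, cross3_add_left, cross3_smul_left, cross3_smul_left,
      show cross3 (γ u) (t u) = p u from rfl, hpt u]
    module
  have hnormcross : ∀ u ∈ I, ‖cross3 (deriv c u) (deriv (deriv c) u)‖ = b^2*(1-K*k u)*Q := by
    intro u hu
    have hm := hreg u hu
    rw [hcrossval u, norm_combo (iγγ u) (itt u) (ipp u) (iγt u) (iγp u) (itp u)]
    rw [show (-(b^2*(1-K*k u)*K))^2 + 0^2 + (b^2*(1-K*k u))^2
        = (b^2*(1-K*k u))^2*(1+K^2) by ring,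
      Real.sqrt_mul (sq_nonneg _), Real.sqrt_sq (by positivity), hQdef]
  -- curvature and torsion on I
  have hcurv : ∀ u ∈ I, curvature c u = (1-K*k u)/(b*(1+K^2)) := by
    intro u hu
    have hm := hreg u hu
    have hn := hspeed u
    rw [speed] at hn
    rw [curvature, hnormcross u hu, hn,
      show (b*Q)^3 = b^3*(Q*Q^2) by ring, hQsq]
    field_simp
  have htors : ∀ u ∈ I, torsion c u = (k u + K)/(b*(1+K^2)) := by
    intro u hu
    have hm := hreg u hu
    rw [torsion, hnormcross u hu, hcrossval u, dc3 u,
      inner3_combo (iγγ u) (itt u) (ipp u) (iγt u) (iγp u) (itp u),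
      show (b^2*(1-K*k u)*Q)^2 = b^4*(1-K*k u)^2*Q^2 by ring, hQsq]
    field_simp
    ring
  -- the ratio τ/κ near s
  have hmem : I ∈ nhds s := hIopen.mem_nhds hs
  have hratio : (fun u => torsion c u / curvature c u)
      =ᶠ[nhds s] fun u => (k u + K)/(1 - K*k u) := by
    filter_upwards [hmem] with u hu
    have hm := hreg u hu
    rw [hcurv u hu, htors u hu]
    rw [div_div_div_cancel_right₀ (by positivity)]
  have hm := hreg s hs
  have hderiv : deriv (fun u => torsion c u / curvature c u) s =
      deriv k s * (1+K^2) / (1 - K*k s)^2 := by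
    rw [hratio.deriv_eq]
    have hnum : HasDerivAt (fun u => k u + K) (deriv k s) s := (hk' s).add_const K
    have hden : HasDerivAt (fun u => 1 - K*k u) (-(K*deriv k s)) s :=
      ((hk' s).const_mul K).const_sub 1
    have h : HasDerivAt (fun u => (k u + K) / (1 - K*k u))
        ((deriv k s * (1 - K * k s) - (k s + K) * -(K * deriv k s)) / (1 - K * k s) ^ 2) s :=
      hnum.div hden hm.ne'
    rw [h.deriv]
    field_simp
    ring
  -- final computation
  unfold sigmaOf
  rw [hderiv, hcurv s hs, htors s hs, hspeed s]
  have hkt : (((1-K*k s)/(b*(1+K^2)))^2 + ((k s + K)/(b*(1+K^2)))^2)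
      = (k s^2+1)/(b^2*(1+K^2)) := by
    field_simp
    ring
  rw [hkt]
  have hrpow : ((k s^2+1)/(b^2*(1+K^2)))^((3:ℝ)/2)
      = (k s^2+1)^((3:ℝ)/2) / (b^2*(1+K^2)*(b*Q)) := by
    rw [Real.div_rpow (by positivity) (by positivity)]
    congr 1
    rw [show (3:ℝ)/2 = 1 + 1/2 by norm_num,
      Real.rpow_add (by positivity), Real.rpow_one, ← Real.sqrt_eq_rpow,
      Real.sqrt_mul (sq_nonneg b), Real.sqrt_sq hb.le, hQdef]
  rw [hrpow]
  have hX : (0:ℝ) < (k s^2+1)^((3:ℝ)/2) := Real.rpow_pos_of_pos (by positivity) _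
  field_simp
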